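/- arXiv:2211.04280 — 2 statements merged into one kernel-verified Lean document; each statement's English description precedes it below -/
import Mathlib

section
/- Let n ∈ ℤ, let Δ(t) = −2t + 5 − 2t⁻¹, and let P₁(t) = (2n+1)·((1/4)Δ(t)² + (1/2)Δ(t) − 3/4). Then the residue at t = 0 of the meromorphic function (1 − t⁻¹)² · P₁(t) / Δ(t)³ equals −(2n+1)/8. Consequently −(1/2) times this residue equals (2n+1)/16. -/
/-!
Multiplying by `t` clears the pole of `Δ`: `t Δ(t) = -2t² + 5t - 2 = -(2t - 1)(t - 2)` has no zero
in `|t| < 1/2`, and the integrand equals `g(t)/t` with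
`g(t) = (2n+1)(t-1)²((tΔ)² + 2t(tΔ) - 3t²) / (4(tΔ)³)` (`tIntegrand n`) holomorphic there. By
Cauchy's integral formula the residue is `g(0) = (2n+1)·4 / (4·(-8)) = -(2n+1)/8`.
-/

open Complex Metric Set

theorem two_pi_I_inv_mul_circleIntegral_eq_of_eqOn_div_sub {f g : ℂ → ℂ} {c : ℂ} {R : ℝ}
    (hR : 0 < R) (hg : DifferentiableOn ℂ g (closedBall c R))
    (hfg : EqOn f (fun z => g z / (z - c)) (sphere c R)) :
    (2 * Real.pi * I)⁻¹ * ∮ z in C(c, R), f z = g c := by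
  rw [circleIntegral.integral_congr hR.le hfg,
    circleIntegral_div_sub_of_differentiable_on_off_countable countable_empty
      (mem_ball_self hR) hg.continuousOn
      fun z hz => hg.differentiableAt (closedBall_mem_nhds_of_mem hz.1),
    inv_mul_cancel_left₀ (by simp [Real.pi_ne_zero, I_ne_zero])]

noncomputable def tDelta (t : ℂ) : ℂ := -2 * t ^ 2 + 5 * t - 2

theorem tDelta_ne_zero {z : ℂ} (hz : ‖z‖ < 1 / 2) : tDelta z ≠ 0 := by
  have h₁ : 2 * z - 1 ≠ 0 := by
    rintro h
    have : ‖2 * z‖ = 1 := by rw [sub_eq_zero.mp h, norm_one]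
    rw [norm_mul, RCLike.norm_ofNat] at this
    linarith
  have h₂ : z - 2 ≠ 0 := by
    rintro h
    rw [sub_eq_zero.mp h, RCLike.norm_ofNat] at hz
    norm_num at hz
  have : tDelta z = -((2 * z - 1) * (z - 2)) := by unfold tDelta; ring
  rw [this]
  exact neg_ne_zero.mpr (mul_ne_zero h₁ h₂)

noncomputable def tIntegrand (n : ℤ) (t : ℂ) : ℂ :=
  (2 * n + 1) * (t - 1) ^ 2 * (tDelta t ^ 2 + 2 * t * tDelta t - 3 * t ^ 2) / (4 * tDelta t ^ 3)

theorem differentiableOn_tIntegrand (n : ℤ) :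
    DifferentiableOn ℂ (tIntegrand n) (ball 0 (1 / 2)) := by
  unfold tIntegrand tDelta
  refine DifferentiableOn.div (by fun_prop) (by fun_prop) fun z hz => ?_
  rw [mem_ball_zero_iff] at hz
  exact mul_ne_zero (by norm_num) (pow_ne_zero 3 (tDelta_ne_zero hz))

theorem tIntegrand_zero (n : ℤ) : tIntegrand n 0 = -(2 * n + 1) / 8 := by
  unfold tIntegrand tDelta
  ring

theorem integrand_eq_tIntegrand_div (n : ℤ) {z : ℂ} (hz : z ≠ 0) (hS : tDelta z ≠ 0) :
    (1 - z⁻¹) ^ 2 * ((2 * n + 1) * ((1 / 4) * (-2 * z + 5 - 2 * z⁻¹) ^ 2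
      + (1 / 2) * (-2 * z + 5 - 2 * z⁻¹) - 3 / 4)) / (-2 * z + 5 - 2 * z⁻¹) ^ 3
      = tIntegrand n z / z := by
  have hΔ : -2 * z + 5 - 2 * z⁻¹ = tDelta z / z := by unfold tDelta; field_simp
  rw [hΔ, tIntegrand]
  field_simp
  ring

/-- For `Δ(t) = −2t + 5 − 2t⁻¹` and
`P₁(t) = (2n+1)((1/4)Δ² + (1/2)Δ − 3/4)`, the residue at `t = 0` of
`(1 − t⁻¹)² P₁(t)/Δ(t)³` (computed as a small circle integral) equals
`−(2n+1)/8`, and `−1/2` times it equals `(2n+1)/16`. -/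
theorem stmt_10 (n : ℤ) (Δ P₁ : ℂ → ℂ)
    (hΔ : ∀ t, Δ t = -2 * t + 5 - 2 * t⁻¹)
    (hP : ∀ t, P₁ t = (2 * n + 1) * ((1 / 4) * (Δ t) ^ 2 + (1 / 2) * Δ t - 3 / 4)) :
    ∃ ε > (0 : ℝ), ∀ ρ : ℝ, 0 < ρ → ρ < ε →
      ((2 * Real.pi * Complex.I)⁻¹ *
          ∮ t in C(0, ρ), (1 - t⁻¹) ^ 2 * P₁ t / (Δ t) ^ 3) = -(2 * n + 1) / 8 ∧
      (-(1 / 2) : ℂ) * ((2 * Real.pi * Complex.I)⁻¹ *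
          ∮ t in C(0, ρ), (1 - t⁻¹) ^ 2 * P₁ t / (Δ t) ^ 3) = (2 * n + 1) / 16 := by
  refine ⟨1 / 2, by norm_num, fun ρ hρ hρ' => ?_⟩
  have hdisc : closedBall (0 : ℂ) ρ ⊆ ball 0 (1 / 2) := closedBall_subset_ball hρ'
  have hres : (2 * Real.pi * I)⁻¹ * ∮ t in C(0, ρ), (1 - t⁻¹) ^ 2 * P₁ t / (Δ t) ^ 3
      = -(2 * n + 1) / 8 := by
    rw [← tIntegrand_zero n]
    refine two_pi_I_inv_mul_circleIntegral_eq_of_eqOn_div_sub hρ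
      ((differentiableOn_tIntegrand n).mono hdisc) fun z hz => ?_
    have hz0 : z ≠ 0 := ne_of_mem_sphere hz hρ.ne'
    simp only [hP, hΔ, sub_zero]
    exact integrand_eq_tIntegrand_div n hz0
      (tDelta_ne_zero (mem_ball_zero_iff.mp (hdisc (sphere_subset_closedBall hz))))
  exact ⟨hres, by rw [hres]; ring⟩
end

section
/- Suppose Δ(t) = b₀ − b₁(t − 2 + t⁻¹) with b₀, b₁ ∈ ℚ, b₁ ≠ 0, and suppose P(t) = a₂Δ(t)² + a₁Δ(t) + a₀ for rational constants a₀, a₁, a₂. Then the residue at t = 0 of (1 − t⁻¹)²·P(t)/Δ(t)³, multiplied by −1/2, equals a₂/(2b₁). -/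
open Complex


private lemma stmt_11_aux (a₀ a₁ a₂ t n : ℂ) (ht0 : t ≠ 0) (htN : n ≠ 0) :
    (1 - t⁻¹) ^ 2 * (a₂ * (n / t) ^ 2 + a₁ * (n / t) + a₀) / (n / t) ^ 3
      = t⁻¹ * ((t - 1) ^ 2 * (a₂ * n ^ 2 + a₁ * n * t + a₀ * t ^ 2) / n ^ 3) := by
  simp only [inv_eq_one_div]
  rw [mul_div_assoc', one_div, inv_mul_eq_div, div_div,
    div_eq_div_iff (pow_ne_zero 3 (div_ne_zero htN ht0)) (mul_ne_zero (pow_ne_zero 3 htN) ht0)]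
  field_simp


/-- If `Δ(t) = b₀ − b₁(t − 2 + t⁻¹)` with `b₁ ≠ 0` and
`P(t) = a₂Δ² + a₁Δ + a₀`, then `−1/2` times the residue at `t = 0` of
`(1 − t⁻¹)² P(t)/Δ(t)³` (computed as a small circle integral)
equals `a₂/(2b₁)`. -/
theorem stmt_11 (b₀ b₁ a₀ a₁ a₂ : ℚ) (hb₁ : b₁ ≠ 0) (Δ P : ℂ → ℂ)
    (hΔ : ∀ t, Δ t = (b₀ : ℂ) - (b₁ : ℂ) * (t - 2 + t⁻¹))
    (hP : ∀ t, P t = (a₂ : ℂ) * (Δ t) ^ 2 + (a₁ : ℂ) * Δ t + (a₀ : ℂ)) :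
    ∃ ε > (0 : ℝ), ∀ ρ : ℝ, 0 < ρ → ρ < ε →
      (-(1 / 2) : ℂ) * ((2 * Real.pi * Complex.I)⁻¹ *
          ∮ t in C(0, ρ), (1 - t⁻¹) ^ 2 * P t / (Δ t) ^ 3) =
        (a₂ : ℂ) / (2 * (b₁ : ℂ)) := by
  have hb₁' : (b₁ : ℂ) ≠ 0 := by exact_mod_cast hb₁
  set N : ℂ → ℂ := fun t => -(b₁:ℂ) * t ^ 2 + ((b₀:ℂ) + 2 * b₁) * t - b₁ with hN
  have hN0 : N 0 = -(b₁:ℂ) := by simp [hN]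
  have hNcont : Continuous N := by fun_prop
  -- choose ε with N nonzero on closed ball
  have hopen : IsOpen {z : ℂ | N z ≠ 0} := isOpen_ne_fun hNcont continuous_const
  have h0mem : (0:ℂ) ∈ {z : ℂ | N z ≠ 0} := by simp [hN0, hb₁']
  obtain ⟨ε, hε, hsub⟩ := (Metric.nhds_basis_closedBall.mem_iff).1 (hopen.mem_nhds h0mem)
  refine ⟨ε, hε, fun ρ hρ hρε => ?_⟩
  set F : ℂ → ℂ := fun t =>
    (t - 1) ^ 2 * ((a₂:ℂ) * N t ^ 2 + (a₁:ℂ) * N t * t + (a₀:ℂ) * t ^ 2) / N t ^ 3 with hF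
  have hball : Metric.closedBall (0:ℂ) ρ ⊆ {z : ℂ | N z ≠ 0} :=
    (Metric.closedBall_subset_closedBall hρε.le).trans hsub
  have hFd : DiffContOnCl ℂ F (Metric.ball 0 ρ) := by
    apply DifferentiableOn.diffContOnCl
    rw [closure_ball _ hρ.ne']
    apply DifferentiableOn.div
    · fun_prop
    · fun_prop
    · intro x hx
      exact pow_ne_zero 3 (hball hx)
  have key : (∮ t in C(0, ρ), (t - 0)⁻¹ • F t) = (2 * Real.pi * Complex.I) • F 0 :=
    hFd.circleIntegral_sub_inv_smul (Metric.mem_ball_self hρ)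
  have hcong : (∮ t in C(0, ρ), (1 - t⁻¹) ^ 2 * P t / (Δ t) ^ 3)
      = ∮ t in C(0, ρ), (t - 0)⁻¹ • F t := by
    apply circleIntegral.integral_congr hρ.le
    intro t ht
    have ht0 : t ≠ 0 := by
      rintro rfl; simp at ht; exact hρ.ne' ht.symm
    have htN : N t ≠ 0 := hball (Metric.sphere_subset_closedBall ht)
    have hΔt : Δ t = N t / t := by
      rw [hΔ, hN]; field_simp; ring
    show (1 - t⁻¹) ^ 2 * P t / Δ t ^ 3 = (t - 0)⁻¹ • F t
    rw [hP, hΔt]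
    simp only [smul_eq_mul, sub_zero, hF]
    exact stmt_11_aux a₀ a₁ a₂ t (N t) ht0 htN
  rw [hcong, key]
  have hπ : (2 * (Real.pi:ℂ) * Complex.I) ≠ 0 := by
    simp [Real.pi_ne_zero, Complex.I_ne_zero]
  have hF0 : F 0 = -(a₂:ℂ) / b₁ := by
    have h3 : (-(b₁:ℂ)) ^ 3 ≠ 0 := pow_ne_zero _ (neg_ne_zero.2 hb₁')
    simp only [hF, hN0]
    rw [div_eq_div_iff h3 hb₁']
    ring
  rw [smul_eq_mul, hF0]
  field_simp
end
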